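/- Let F : ℝ → ℂ be three times continuously differentiable with F′(0) = 0 and sup_{s ≥ 0} (|F(s)| + |F′(s)| + |F″(s)| + |F‴(s)|) < ∞ (no assumption on F″(0)). Let g : ℝ → ℂ be measurable with ∫_ℝ (1+|y|)³|g(y)| dy < ∞ and ∫_ℝ y^k·g(y) dy = 0 for k = 0, 1, 2. Then for every λ > 0 and every x ∈ ℝ, both integrals converge absolutely and ∫_ℝ F(λ|x−y|) g(y) dy = −(λ³/2)·∫_ℝ ∫₀¹ (1−θ)²·sgn(x−θy)·F‴(λ|x−θy|)·y³·g(y) dθ dy. -/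

import Mathlib

/-! Put `φ s = F (l * |s|)`. Off `s = 0` the chain rule gives `φ' s = l sign s • F' (l |s|)`,
`φ'' s = l² • F'' (l |s|)` and `φ''' s = l³ sign s • F''' (l |s|)`; the hypothesis `F' 0 = 0`
is exactly what makes `φ'` continuous at `0`. Since the fundamental theorem of calculus tolerates
countably many points of non-differentiability, Taylor's formula of order two with integral
remainder holds for `φ` along `θ ↦ x - θ y` (which crosses `0` at most once), so `φ (x - y)` is a
quadratic polynomial in `y` plus `-(y³ / 2) ∫₀¹ (1 - θ)² φ''' (x - θ y) dθ`. Integrating against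
`g`, the polynomial part vanishes by the moment conditions, and the remainder is dominated by
`sup |F'''| · |y|³ |g y|`. -/

open MeasureTheory Set

namespace Real

lemma abs_sign_le_one (r : ℝ) : |sign r| ≤ 1 := by
  rcases sign_apply_eq r with h | h | h <;> simp [h]

lemma sign_mul_sign_of_ne_zero {r : ℝ} (hr : r ≠ 0) : sign r * sign r = 1 := by
  rcases sign_apply_eq_of_ne_zero r hr with h | h <;> simp [h]

lemma coe_signType_sign (r : ℝ) : (SignType.sign r : ℝ) = sign r := by
  rcases lt_trichotomy r 0 with h | rfl | h
  · simp [h, sign_of_neg]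
  · simp [sign_zero]
  · simp [h, sign_of_pos]

@[fun_prop]
lemma measurable_sign : Measurable sign :=
  (measurable_const.ite (measurableSet_lt measurable_id measurable_const)
    (measurable_const.ite (measurableSet_lt measurable_const measurable_id) measurable_const))

lemma hasDerivAt_sign {r : ℝ} (hr : r ≠ 0) : HasDerivAt sign 0 r := by
  refine (hasDerivAt_const r (sign r)).congr_of_eventuallyEq ?_
  rcases hr.lt_or_gt with h | h
  · filter_upwards [Iio_mem_nhds h] with t ht
    rw [sign_of_neg h, sign_of_neg ht]
  · filter_upwards [Ioi_mem_nhds h] with t ht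
    rw [sign_of_pos h, sign_of_pos ht]

end Real

section Calculus

variable {E : Type*} [NormedAddCommGroup E] [NormedSpace ℝ E]

theorem continuous_sign_smul_comp_abs {h : ℝ → E} (hh : Continuous h) (h0 : h 0 = 0) :
    Continuous fun s => Real.sign s • h |s| := by
  have : (fun s => Real.sign s • h |s|) = fun s => if s ≤ 0 then -h (-s) else h s := by
    ext s
    rcases lt_trichotomy s 0 with hs | rfl | hs
    · simp [Real.sign_of_neg hs, abs_of_neg hs, hs.le]
    · simp [h0]
    · simp [Real.sign_of_pos hs, abs_of_pos hs, hs.not_ge]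
  rw [this]
  exact continuous_if_le continuous_id continuous_const (hh.comp continuous_neg).neg.continuousOn
    hh.continuousOn fun s hs => by simp [hs, h0]

theorem HasDerivAt.comp_mul_abs {f : ℝ → E} {f' : E} {l s : ℝ} (hf : HasDerivAt f f' (l * |s|))
    (hs : s ≠ 0) : HasDerivAt (fun t => f (l * |t|)) ((l * Real.sign s) • f') s := by
  have habs := (hasDerivAt_abs hs).const_mul l
  rw [Real.coe_signType_sign] at habs
  exact hf.scomp s habs

theorem HasDerivAt.sign_smul_comp_mul_abs {f : ℝ → E} {f' : E} {l s : ℝ}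
    (hf : HasDerivAt f f' (l * |s|)) (hs : s ≠ 0) :
    HasDerivAt (fun t => Real.sign t • f (l * |t|)) (l • f') s := by
  refine ((Real.hasDerivAt_sign hs).smul (hf.comp_mul_abs hs)).congr_deriv ?_
  rw [smul_smul, mul_left_comm, Real.sign_mul_sign_of_ne_zero hs, mul_one, zero_smul, add_zero]

theorem taylor_two_integral_off_countable [CompleteSpace E] {u u₁ u₂ u₃ : ℝ → E} {S : Set ℝ}
    (hS : S.Countable) (hu : ContinuousOn u (Icc 0 1)) (hu₁ : ContinuousOn u₁ (Icc 0 1))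
    (hu₂ : ContinuousOn u₂ (Icc 0 1)) (hd : ∀ θ ∈ Ioo 0 1 \ S, HasDerivAt u (u₁ θ) θ)
    (hd₁ : ∀ θ ∈ Ioo 0 1 \ S, HasDerivAt u₁ (u₂ θ) θ)
    (hd₂ : ∀ θ ∈ Ioo 0 1 \ S, HasDerivAt u₂ (u₃ θ) θ) (hi : IntervalIntegrable u₃ volume 0 1) :
    u 1 = u 0 + u₁ 0 + (1 / 2 : ℝ) • u₂ 0 + ∫ θ in (0 : ℝ)..1, ((1 - θ) ^ 2 / 2) • u₃ θ := by
  -- `u + (1 - θ) u₁ + (1 - θ)² u₂ / 2` is a primitive of the remainder integrand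
  have hG := integral_eq_of_hasDerivAt_off_countable_of_le
    (fun θ => u θ + (1 - θ) • u₁ θ + ((1 - θ) ^ 2 / 2) • u₂ θ)
    (fun θ => ((1 - θ) ^ 2 / 2) • u₃ θ) zero_le_one hS ?_ ?_
    (hi.continuousOn_smul (by fun_prop))
  · rw [hG]
    simp only [sub_self, zero_smul, add_zero, sub_zero, one_smul, ne_eq, OfNat.ofNat_ne_zero,
      not_false_eq_true, zero_pow, zero_div, one_pow]
    module
  · exact (hu.add ((continuousOn_const.sub continuousOn_id).smul hu₁)).add
      ((((continuousOn_const.sub continuousOn_id).pow 2).div_const 2).smul hu₂)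
  · intro θ hθ
    have hlin : HasDerivAt (fun t : ℝ => 1 - t) (-1) θ := by
      simpa using (hasDerivAt_id θ).const_sub 1
    refine (((hd θ hθ).add (hlin.smul (hd₁ θ hθ))).add
      (((hlin.pow 2).div_const 2).smul (hd₂ θ hθ))).congr_deriv ?_
    simp only [Pi.pow_apply, Nat.reduceSub, pow_one]
    module

theorem intervalIntegrable_sign_comp {a : ℝ → ℝ} (ha : Measurable a) (s t : ℝ) :
    IntervalIntegrable (fun θ => Real.sign (a θ)) volume s t :=
  (intervalIntegrable_const (c := (1 : ℝ))).mono_fun'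
    (Real.measurable_sign.comp ha).aestronglyMeasurable
    (ae_of_all _ fun θ => by simpa using Real.abs_sign_le_one (a θ))

theorem ContDiff.hasDerivAt_iteratedDeriv {F : ℝ → E} {n : ℕ} (hF : ContDiff ℝ n F) {m : ℕ}
    (hm : m < n) (t : ℝ) : HasDerivAt (iteratedDeriv m F) (iteratedDeriv (m + 1) F t) t := by
  rw [iteratedDeriv_succ]
  exact (hF.differentiable_iteratedDeriv m (by exact_mod_cast hm)).differentiableAt.hasDerivAt

theorem taylor_comp_mul_abs [CompleteSpace E] {F : ℝ → E} (hF : ContDiff ℝ 3 F)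
    (hF'0 : deriv F 0 = 0) (l x y : ℝ) :
    F (l * |x - y|) = F (l * |x|) - (y * l * Real.sign x) • deriv F (l * |x|) +
      (y ^ 2 * l ^ 2 / 2) • iteratedDeriv 2 F (l * |x|) -
      (l ^ 3 * y ^ 3 / 2) • ∫ θ in (0 : ℝ)..1,
        ((1 - θ) ^ 2 * Real.sign (x - θ * y)) • iteratedDeriv 3 F (l * |x - θ * y|) := by
  rcases eq_or_ne y 0 with rfl | hy
  · simp
  have hF₁ := hF.hasDerivAt_iteratedDeriv (m := 0) (by norm_num)
  have hF₂ := hF.hasDerivAt_iteratedDeriv (m := 1) (by norm_num)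
  have hF₃ := hF.hasDerivAt_iteratedDeriv (m := 2) (by norm_num)
  simp only [iteratedDeriv_zero, zero_add, iteratedDeriv_one, Nat.reduceAdd] at hF₁ hF₂ hF₃
  have hF₀c : Continuous F := hF.continuous
  have hF₂c : Continuous (iteratedDeriv 2 F) := hF.continuous_iteratedDeriv 2 (by norm_num)
  have hF₃c : Continuous (iteratedDeriv 3 F) := hF.continuous_iteratedDeriv 3 (by norm_num)
  have hp : ∀ θ, HasDerivAt (fun θ => x - θ * y) (-y) θ := fun θ => by
    simpa using ((hasDerivAt_id θ).mul_const y).const_sub x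
  have hpS : ∀ θ ∉ ({x / y} : Set ℝ), x - θ * y ≠ 0 := fun θ hθ h =>
    hθ (by rw [mem_singleton_iff, eq_div_iff hy]; linarith)
  have key := taylor_two_integral_off_countable (S := {x / y}) (countable_singleton _)
    (u := fun θ => F (l * |x - θ * y|))
    (u₁ := fun θ => (-(y * l)) • (Real.sign (x - θ * y) • deriv F (l * |x - θ * y|)))
    (u₂ := fun θ => (y ^ 2 * l ^ 2) • iteratedDeriv 2 F (l * |x - θ * y|))
    (u₃ := fun θ => (-(y ^ 3 * l ^ 3) * Real.sign (x - θ * y)) •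
      iteratedDeriv 3 F (l * |x - θ * y|))
    (by fun_prop) ?_ (by fun_prop) ?_ ?_ ?_ ?_
  · simp only [one_mul, zero_mul, sub_zero] at key
    rw [key, ← intervalIntegral.integral_smul]
    have hrem : (∫ θ in (0 : ℝ)..1, ((1 - θ) ^ 2 / 2) •
        ((-(y ^ 3 * l ^ 3) * Real.sign (x - θ * y)) • iteratedDeriv 3 F (l * |x - θ * y|))) =
        -∫ θ in (0 : ℝ)..1, (l ^ 3 * y ^ 3 / 2) •
          ((1 - θ) ^ 2 * Real.sign (x - θ * y)) • iteratedDeriv 3 F (l * |x - θ * y|) := by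
      rw [← intervalIntegral.integral_neg]
      exact intervalIntegral.integral_congr fun θ _ => by module
    rw [hrem]
    module
  · exact ((continuous_sign_smul_comp_abs (h := fun r => deriv F (l * r))
      ((hF.continuous_deriv (by norm_num)).comp (continuous_const_mul l))
      (by simpa using hF'0)).comp
      (continuous_const.sub (continuous_id.mul continuous_const))).continuousOn.const_smul _
  · intro θ hθ
    refine (((hF₁ _).comp_mul_abs (hpS θ hθ.2)).scomp θ (hp θ)).congr_deriv ?_
    module
  · intro θ hθ
    refine ((((hF₂ _).sign_smul_comp_mul_abs (hpS θ hθ.2)).scomp θ (hp θ)).const_smul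
      (-(y * l))).congr_deriv ?_
    module
  · intro θ hθ
    refine ((((hF₃ _).comp_mul_abs (hpS θ hθ.2)).scomp θ (hp θ)).const_smul
      (y ^ 2 * l ^ 2)).congr_deriv ?_
    module
  · exact ((intervalIntegrable_sign_comp (by fun_prop) 0 1).const_mul _).smul_continuousOn
      (by fun_prop)

theorem MeasureTheory.Integrable.intervalIntegral_prod_left {f : ℝ × ℝ → E} {a b : ℝ}
    (hab : a ≤ b) (hf : Integrable f (volume.prod (volume.restrict (Icc a b)))) :
    Integrable (fun y => ∫ θ in a..b, f (y, θ)) := by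
  refine hf.integral_prod_left.congr (ae_of_all _ fun y => ?_)
  dsimp only
  rw [intervalIntegral.integral_of_le hab, integral_Icc_eq_integral_Ioc]

end Calculus

theorem integrable_pow_mul_of_integrable_weight {g : ℝ → ℂ} (hgm : Measurable g) {n k : ℕ}
    (hg : Integrable (fun y : ℝ => (1 + |y|) ^ n * ‖g y‖)) (hk : k ≤ n) :
    Integrable (fun y : ℝ => (y : ℂ) ^ k * g y) := by
  refine hg.mono' (by fun_prop) (ae_of_all _ fun y => ?_)
  rw [norm_mul, norm_pow, Complex.norm_real, Real.norm_eq_abs]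
  have h1 : 1 ≤ 1 + |y| := le_add_of_nonneg_right (abs_nonneg y)
  gcongr
  calc |y| ^ k ≤ (1 + |y|) ^ k := by gcongr; linarith
    _ ≤ (1 + |y|) ^ n := pow_le_pow_right₀ h1 hk

theorem integral_quadratic_mul_eq_zero {g : ℝ → ℂ}
    (hi : ∀ k ≤ 2, Integrable (fun y : ℝ => (y : ℂ) ^ k * g y))
    (hmom : ∀ k ≤ 2, ∫ y : ℝ, (y : ℂ) ^ k * g y = 0) (a b c : ℂ) :
    ∫ y : ℝ, (a + b * (y : ℂ) + c * (y : ℂ) ^ 2) * g y = 0 := by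
  have hsplit : (fun y : ℝ => (a + b * (y : ℂ) + c * (y : ℂ) ^ 2) * g y) = fun y : ℝ =>
      a * ((y : ℂ) ^ 0 * g y) + b * ((y : ℂ) ^ 1 * g y) + c * ((y : ℂ) ^ 2 * g y) := by
    ext y; ring
  have hi₀ := hi 0 (by norm_num)
  have hi₁ := hi 1 (by norm_num)
  have hi₂ := hi 2 le_rfl
  rw [hsplit, integral_add, integral_add, integral_const_mul, integral_const_mul,
    integral_const_mul, hmom 0 (by norm_num), hmom 1 (by norm_num), hmom 2 le_rfl]
  · ring
  all_goals fun_prop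

theorem norm_taylor_kernel_le {F : ℝ → ℂ} {M l : ℝ} (hl : 0 ≤ l)
    (hM : ∀ s, 0 ≤ s → ‖iteratedDeriv 3 F s‖ ≤ M) (x y : ℝ) {θ : ℝ} (hθ : θ ∈ Icc (0 : ℝ) 1) :
    ‖(((1 - θ) ^ 2 : ℝ) : ℂ) * (Real.sign (x - θ * y) : ℂ) *
      iteratedDeriv 3 F (l * |x - θ * y|)‖ ≤ M := by
  simp only [norm_mul, Complex.norm_real, Real.norm_eq_abs]
  have h1 : |(1 - θ) ^ 2| ≤ 1 := by
    rw [abs_of_nonneg (sq_nonneg _)]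
    nlinarith [hθ.1, hθ.2]
  calc |(1 - θ) ^ 2| * |Real.sign (x - θ * y)| * ‖iteratedDeriv 3 F (l * |x - θ * y|)‖
      ≤ 1 * 1 * M := by
        gcongr
        · exact Real.abs_sign_le_one _
        · exact hM _ (by positivity)
    _ = M := by ring

theorem integrable_taylor_kernel {F g : ℝ → ℂ} {M l : ℝ} (hl : 0 ≤ l)
    (hF₃ : Continuous (iteratedDeriv 3 F)) (hM : ∀ s, 0 ≤ s → ‖iteratedDeriv 3 F s‖ ≤ M)
    (hg : Integrable (fun y : ℝ => (y : ℂ) ^ 3 * g y)) (x : ℝ) :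
    Integrable (fun p : ℝ × ℝ =>
        (((1 - p.2) ^ 2 : ℝ) : ℂ) * (Real.sign (x - p.2 * p.1) : ℂ) *
          iteratedDeriv 3 F (l * |x - p.2 * p.1|) * ((p.1 : ℂ) ^ 3 * g p.1))
      (volume.prod (volume.restrict (Icc 0 1))) :=
  (hg.comp_fst _).bdd_mul (by fun_prop)
    ((Measure.quasiMeasurePreserving_snd.ae (ae_restrict_mem measurableSet_Icc)).mono
      fun p hp => norm_taylor_kernel_le hl hM x p.1 hp)

theorem taylor_comp_mul_abs_mul_add {F : ℝ → ℂ} (hF : ContDiff ℝ 3 F) (hF'0 : deriv F 0 = 0)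
    (g : ℝ → ℂ) (l x y : ℝ) :
    F (l * |x - y|) * g y + (l ^ 3 / 2) * ∫ θ in (0 : ℝ)..1,
        (((1 - θ) ^ 2 : ℝ) : ℂ) * (Real.sign (x - θ * y) : ℂ) *
          iteratedDeriv 3 F (l * |x - θ * y|) * ((y : ℂ) ^ 3 * g y) =
      (F (l * |x|) + -(l * Real.sign x * deriv F (l * |x|)) * y +
        l ^ 2 / 2 * iteratedDeriv 2 F (l * |x|) * y ^ 2) * g y := by
  rw [taylor_comp_mul_abs hF hF'0 l x y, intervalIntegral.integral_mul_const]
  simp only [Complex.real_smul]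
  push_cast
  ring

/-- Order-three moment cancellation: if `g` has vanishing moments of orders `0, 1, 2` and
`F'(0) = 0` (no assumption on `F''(0)`), then
`∫ F(λ|x-y|) g(y) dy = -(λ³/2) ∫∫ (1-θ)² sgn(x-θy) F'''(λ|x-θy|) y³ g(y) dθ dy`,
both integrals being absolutely convergent. -/
theorem stmt7 (F : ℝ → ℂ) (hF : ContDiff ℝ 3 F) (hF'0 : deriv F 0 = 0)
    (hbd : ∃ M : ℝ, ∀ s : ℝ, 0 ≤ s →
      ‖F s‖ + ‖deriv F s‖ + ‖iteratedDeriv 2 F s‖ + ‖iteratedDeriv 3 F s‖ ≤ M)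
    (g : ℝ → ℂ) (hgm : Measurable g)
    (hgint : Integrable (fun y : ℝ => (1 + |y|) ^ 3 * ‖g y‖))
    (hmom : ∀ k : ℕ, k ≤ 2 → ∫ y : ℝ, (y : ℂ) ^ k * g y = 0)
    (l : ℝ) (hl : 0 < l) (x : ℝ) :
    Integrable (fun y : ℝ => F (l * |x - y|) * g y) ∧
    Integrable
      (fun p : ℝ × ℝ =>
        (((1 - p.2) ^ 2 : ℝ) : ℂ) * (Real.sign (x - p.2 * p.1) : ℂ) *
          iteratedDeriv 3 F (l * |x - p.2 * p.1|) * ((p.1 : ℂ) ^ 3 * g p.1))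
      (volume.prod (volume.restrict (Set.Icc 0 1))) ∧
    ∫ y : ℝ, F (l * |x - y|) * g y =
      -((l : ℂ) ^ 3 / 2) * ∫ y : ℝ, ∫ θ in (0:ℝ)..1,
        (((1 - θ) ^ 2 : ℝ) : ℂ) * (Real.sign (x - θ * y) : ℂ) *
          iteratedDeriv 3 F (l * |x - θ * y|) * ((y : ℂ) ^ 3 * g y) := by
  obtain ⟨M, hM⟩ := hbd
  have hF₀M : ∀ s, 0 ≤ s → ‖F s‖ ≤ M := fun s hs => by
    linarith [hM s hs, norm_nonneg (deriv F s), norm_nonneg (iteratedDeriv 2 F s),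
      norm_nonneg (iteratedDeriv 3 F s)]
  have hF₃M : ∀ s, 0 ≤ s → ‖iteratedDeriv 3 F s‖ ≤ M := fun s hs => by
    linarith [hM s hs, norm_nonneg (F s), norm_nonneg (deriv F s),
      norm_nonneg (iteratedDeriv 2 F s)]
  have hg : ∀ k ≤ 3, Integrable (fun y : ℝ => (y : ℂ) ^ k * g y) := fun k hk =>
    integrable_pow_mul_of_integrable_weight hgm hgint hk
  have hF₀ : Continuous F := hF.continuous
  have hlhs : Integrable (fun y : ℝ => F (l * |x - y|) * g y) :=
    (by simpa using hg 0 (by norm_num) : Integrable g).bdd_mul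
      (f := fun y => F (l * |x - y|)) (by fun_prop)
      (ae_of_all _ fun y => hF₀M _ (mul_nonneg hl.le (abs_nonneg _)))
  have hK := integrable_taylor_kernel hl.le (hF.continuous_iteratedDeriv 3 le_rfl) hF₃M
    (hg 3 le_rfl) x
  refine ⟨hlhs, hK, ?_⟩
  have h := integral_add hlhs ((hK.intervalIntegral_prod_left zero_le_one).const_mul
    ((l : ℂ) ^ 3 / 2))
  rw [integral_congr_ae (ae_of_all _ (taylor_comp_mul_abs_mul_add hF hF'0 g l x)),
    integral_quadratic_mul_eq_zero (fun k hk => hg k (by omega)) hmom, integral_const_mul] at h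
  linear_combination -h
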